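/- arXiv:2508.19133 — 2 statements merged into one kernel-verified Lean document; each statement's English description precedes it below -/
import Mathlib

section
/- Suppose ν > 0 and n̄ : ℝ → ℝ solves n̄' = α n̄ − β n̄^{1+γθ} − aμ^{-1} n̄^{1+γ} with β ν^{γθ} + aμ^{-1} ν^{γ} < α/2 and 0 < n̄(t₀) = ξ ≤ ν for some t₀ ≥ 0, and 0 < n̄(t) ≤ ν for t ∈ [0, t₀]. Then n̄(t) ≤ ξ e^{−α(t₀ − t)/2} for all 0 ≤ t ≤ t₀. -/
/-- Backward exponential smallness: if `β ν^(γθ) + aμ⁻¹ ν^γ < α/2`, `n̄` solves the ODE on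
`[0, t₀]`, stays in `(0, ν]` there, and `n̄(t₀) = ξ ∈ (0, ν]`, then
`n̄(t) ≤ ξ e^{-α (t₀ - t)/2}` for `0 ≤ t ≤ t₀`. -/
theorem stmt6 (α β a μ γ θ ν ξ t₀ : ℝ) (hα : 0 < α) (hβ : 0 < β) (ha : 0 < a) (hμ : 0 < μ)
    (hγ : 1 ≤ γ) (hθ : 0 < θ) (hν : 0 < ν)
    (hsmall : β * ν ^ (γ * θ) + a * μ⁻¹ * ν ^ γ < α / 2)
    (ht₀ : 0 ≤ t₀)
    (n : ℝ → ℝ)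
    (hode : ∀ t ∈ Set.Icc (0:ℝ) t₀,
      HasDerivAt n (α * n t - β * n t ^ (1 + γ * θ) - a * μ⁻¹ * n t ^ (1 + γ)) t)
    (hbound : ∀ t ∈ Set.Icc (0:ℝ) t₀, 0 < n t ∧ n t ≤ ν)
    (hξ : n t₀ = ξ) (hξpos : 0 < ξ) (hξν : ξ ≤ ν) :
    ∀ t ∈ Set.Icc (0:ℝ) t₀, n t ≤ ξ * Real.exp (-α * (t₀ - t) / 2) := by
  set g : ℝ → ℝ := fun t => n t * Real.exp (-(α/2) * t) with hg
  -- derivative of g is nonnegative on Icc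
  have hgderiv : ∀ t ∈ Set.Icc (0:ℝ) t₀,
      HasDerivAt g ((α * n t - β * n t ^ (1 + γ * θ) - a * μ⁻¹ * n t ^ (1 + γ))
        * Real.exp (-(α/2) * t) + n t * (-(α/2) * Real.exp (-(α/2) * t))) t := by
    intro t ht
    have he : HasDerivAt (fun t => Real.exp (-(α/2) * t)) (-(α/2) * Real.exp (-(α/2) * t)) t := by
      have := ((hasDerivAt_id t).const_mul (-(α/2))).exp
      simpa [mul_comm] using this
    exact (hode t ht).mul he
  have hderiv_nonneg : ∀ t ∈ Set.Icc (0:ℝ) t₀,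
      0 ≤ (α * n t - β * n t ^ (1 + γ * θ) - a * μ⁻¹ * n t ^ (1 + γ))
        * Real.exp (-(α/2) * t) + n t * (-(α/2) * Real.exp (-(α/2) * t)) := by
    intro t ht
    obtain ⟨hnpos, hnν⟩ := hbound t ht
    have hγθ : 0 < γ * θ := mul_pos (lt_of_lt_of_le one_pos hγ) hθ
    have hγ0 : 0 < γ := lt_of_lt_of_le one_pos hγ
    have h1 : n t ^ (1 + γ * θ) = n t * n t ^ (γ * θ) := by
      rw [Real.rpow_add hnpos, Real.rpow_one]
    have h2 : n t ^ (1 + γ) = n t * n t ^ γ := by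
      rw [Real.rpow_add hnpos, Real.rpow_one]
    have hb1 : n t ^ (γ * θ) ≤ ν ^ (γ * θ) :=
      Real.rpow_le_rpow hnpos.le hnν hγθ.le
    have hb2 : n t ^ γ ≤ ν ^ γ := Real.rpow_le_rpow hnpos.le hnν hγ0.le
    have hkey : β * n t ^ (γ * θ) + a * μ⁻¹ * n t ^ γ ≤ α / 2 := by
      have : β * n t ^ (γ * θ) + a * μ⁻¹ * n t ^ γ
          ≤ β * ν ^ (γ * θ) + a * μ⁻¹ * ν ^ γ := by
        gcongr
      linarith
    have hfact : α * n t - β * n t ^ (1 + γ * θ) - a * μ⁻¹ * n t ^ (1 + γ)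
        = n t * (α - (β * n t ^ (γ * θ) + a * μ⁻¹ * n t ^ γ)) := by
      rw [h1, h2]; ring
    have hge : (α/2) * n t ≤ α * n t - β * n t ^ (1 + γ * θ) - a * μ⁻¹ * n t ^ (1 + γ) := by
      rw [hfact]
      have : α / 2 ≤ α - (β * n t ^ (γ * θ) + a * μ⁻¹ * n t ^ γ) := by linarith
      calc (α/2) * n t = n t * (α/2) := mul_comm _ _
        _ ≤ n t * (α - (β * n t ^ (γ * θ) + a * μ⁻¹ * n t ^ γ)) := by
            exact mul_le_mul_of_nonneg_left this hnpos.le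
    have hexp : 0 < Real.exp (-(α/2) * t) := Real.exp_pos _
    nlinarith [mul_le_mul_of_nonneg_right hge hexp.le]
  -- g is monotone on Icc 0 t₀
  have hcont : ContinuousOn g (Set.Icc 0 t₀) := fun t ht =>
    ((hgderiv t ht).continuousAt).continuousWithinAt
  have hmono : MonotoneOn g (Set.Icc 0 t₀) := by
    apply monotoneOn_of_deriv_nonneg (convex_Icc _ _) hcont
    · intro t ht
      rw [interior_Icc] at ht
      exact ((hgderiv t (Set.mem_Icc_of_Ioo ht)).differentiableAt).differentiableWithinAt
    · intro t ht
      rw [interior_Icc] at ht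
      rw [(hgderiv t (Set.mem_Icc_of_Ioo ht)).deriv]
      exact hderiv_nonneg t (Set.mem_Icc_of_Ioo ht)
  intro t ht
  have hgle : g t ≤ g t₀ := hmono ht (Set.right_mem_Icc.mpr ht₀) ht.2
  have hgt₀ : g t₀ = ξ * Real.exp (-(α/2) * t₀) := by simp [hg, hξ]
  rw [hgt₀] at hgle
  have hexp : 0 < Real.exp (-(α/2) * t) := Real.exp_pos _
  have : n t ≤ ξ * Real.exp (-(α/2) * t₀) / Real.exp (-(α/2) * t) := by
    rw [le_div_iff₀ hexp]
    simpa [hg] using hgle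
  calc n t ≤ ξ * Real.exp (-(α/2) * t₀) / Real.exp (-(α/2) * t) := this
    _ = ξ * Real.exp (-α * (t₀ - t) / 2) := by
        rw [mul_div_assoc, ← Real.exp_sub]
        ring_nf
end

section
/- Let α, β > 0, γθ > 0, n* = (α/β)^{1/(γθ)}, and M > n*. If n̄ solves n̄'(t) = α n̄ − β n̄^{1+γθ} with n̄(0) = M, then there exists r > 0 depending only on α, β and γθ but not on M, such that n̄(t) ≤ n* + (M − n*) e^{−rt} for all t ≥ 0. -/
open Set Real Filter Topology

/-- For the ODE `n̄' = α n̄ - β n̄^(1+γθ)` with `n* = (α/β)^(1/(γθ))`, there is a rate `r > 0`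
depending only on `α, β, γθ` (not on `M`) such that any solution with `n̄(0) = M > n*`
satisfies `n̄(t) ≤ n* + (M - n*) e^{-r t}` for all `t ≥ 0`. -/
theorem stmt18 (α β γ θ : ℝ) (hα : 0 < α) (hβ : 0 < β) (hγθ : 0 < γ * θ) :
    ∃ r > 0, ∀ M : ℝ, ∀ n : ℝ → ℝ,
      (α / β) ^ (1 / (γ * θ)) < M → n 0 = M →
      (∀ t, 0 ≤ t → HasDerivAt n (α * n t - β * n t ^ (1 + γ * θ)) t) →
      ∀ t, 0 ≤ t →
        n t ≤ (α / β) ^ (1 / (γ * θ)) +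
          (M - (α / β) ^ (1 / (γ * θ))) * Real.exp (-r * t) := by
  refine ⟨α * (γ * θ), by positivity, ?_⟩
  intro M n hM hn0 hdn t ht
  set nst : ℝ := (α / β) ^ (1 / (γ * θ)) with hnst_def
  have habpos : 0 < α / β := div_pos hα hβ
  have hnpos : 0 < nst := Real.rpow_pos_of_pos habpos _
  have hns : nst ^ (γ * θ) = α / β := by
    rw [hnst_def, ← Real.rpow_mul habpos.le, one_div_mul_cancel hγθ.ne', Real.rpow_one]
  -- key tangent-line inequality
  have key : ∀ x : ℝ, 0 ≤ x →
      α * x - β * x ^ (1 + γ * θ) ≤ -(α * (γ * θ)) * (x - nst) := by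
    intro x hx
    rcases hx.eq_or_lt with h0 | hxpos
    · rw [← h0, Real.zero_rpow (by positivity)]
      nlinarith [mul_pos hα hγθ, hnpos]
    · have hB : 1 + (1 + γ * θ) * (x / nst - 1) ≤ (1 + (x / nst - 1)) ^ (1 + γ * θ) :=
        one_add_mul_self_le_rpow_one_add
          (by have : 0 ≤ x / nst := div_nonneg hx hnpos.le; linarith)
          (by linarith)
      have h1 : (1 : ℝ) + (x / nst - 1) = x / nst := by ring
      rw [h1] at hB
      have hdiv : (x / nst) ^ (1 + γ * θ) = x ^ (1 + γ * θ) / nst ^ (1 + γ * θ) :=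
        Real.div_rpow hx hnpos.le _
      have hNn : nst ^ (1 + γ * θ) = nst * (α / β) := by
        rw [Real.rpow_add hnpos, Real.rpow_one, hns]
      rw [hdiv, hNn] at hB
      rw [le_div_iff₀ (by positivity)] at hB
      have expand : (1 + (1 + γ * θ) * (x / nst - 1)) * (nst * (α / β)) =
          (α / β) * (x + (γ * θ) * (x - nst)) := by
        field_simp
        ring
      rw [expand] at hB
      have h2 := mul_le_mul_of_nonneg_left hB hβ.le
      have h3 : β * ((α / β) * (x + (γ * θ) * (x - nst))) =
          α * (x + (γ * θ) * (x - nst)) := by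
        field_simp
      rw [h3] at h2
      nlinarith [h2]
  -- invariance: n stays above nst/2
  have inv : ∀ u : ℝ, 0 ≤ u → nst / 2 < n u := by
    by_contra hcon
    push_neg at hcon
    obtain ⟨t₁, ht₁0, ht₁⟩ := hcon
    set c : ℝ := nst / 2 with hc_def
    have hc : 0 < c := by positivity
    have hclt : c < nst := by simp [hc_def]; linarith
    have hfc : 0 < α * c - β * c ^ (1 + γ * θ) := by
      have hcs : c ^ (γ * θ) < α / β := by
        rw [← hns]; exact Real.rpow_lt_rpow hc.le hclt hγθ
      have hce : c ^ (1 + γ * θ) = c * c ^ (γ * θ) := by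
        rw [Real.rpow_add hc, Real.rpow_one]
      rw [hce]
      have hcsnn : 0 ≤ c ^ (γ * θ) := Real.rpow_nonneg hc.le _
      have hba : β * c ^ (γ * θ) < α := by
        have := (lt_div_iff₀ hβ).mp hcs
        linarith
      nlinarith
    set S : Set ℝ := {u | 0 ≤ u ∧ n u ≤ c} with hS_def
    have hSne : S.Nonempty := ⟨t₁, ht₁0, ht₁⟩
    have hSbd : BddBelow S := ⟨0, fun u hu => hu.1⟩
    have hScl : IsClosed S := by
      apply IsSeqClosed.isClosed
      intro x p hx hxp
      have hp0 : 0 ≤ p := ge_of_tendsto hxp (Eventually.of_forall fun k => (hx k).1)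
      refine ⟨hp0, ?_⟩
      have hcont : ContinuousAt n p := (hdn p hp0).continuousAt
      exact le_of_tendsto (hcont.tendsto.comp hxp) (Eventually.of_forall fun k => (hx k).2)
    set t₀ : ℝ := sInf S with ht₀_def
    have ht₀S : t₀ ∈ S := hScl.csInf_mem hSne hSbd
    have ht₀0 : 0 ≤ t₀ := ht₀S.1
    have ht₀pos : 0 < t₀ := by
      rcases ht₀0.eq_or_lt with h | h
      · exfalso
        have : n 0 ≤ c := by rw [h]; exact ht₀S.2
        rw [hn0] at this
        linarith
      · exact h
    have hlt : ∀ u, 0 ≤ u → u < t₀ → c < n u := by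
      intro u hu hut
      by_contra h
      push_neg at h
      exact absurd (csInf_le hSbd ⟨hu, h⟩) (not_le.mpr hut)
    have hge : c ≤ n t₀ := by
      have hcw : Tendsto n (𝓝[<] t₀) (𝓝 (n t₀)) :=
        ((hdn t₀ ht₀0).continuousAt.continuousWithinAt (s := Iio t₀)).tendsto
      refine ge_of_tendsto hcw ?_
      filter_upwards [Ioo_mem_nhdsLT_of_mem (Set.mem_Ioc.mpr ⟨ht₀pos, le_refl _⟩)] with u hu
      exact (hlt u hu.1.le hu.2).le
    have heq : n t₀ = c := le_antisymm ht₀S.2 hge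
    have hd := hdn t₀ ht₀0
    rw [hasDerivAt_iff_tendsto_slope] at hd
    have hd' : Tendsto (slope n t₀) (𝓝[<] t₀)
        (𝓝 (α * n t₀ - β * n t₀ ^ (1 + γ * θ))) :=
      hd.mono_left (nhdsWithin_mono _ fun u hu => ne_of_lt hu)
    have hle : α * n t₀ - β * n t₀ ^ (1 + γ * θ) ≤ 0 := by
      refine le_of_tendsto hd' ?_
      filter_upwards [Ioo_mem_nhdsLT_of_mem (Set.mem_Ioc.mpr ⟨ht₀pos, le_refl _⟩)] with u hu
      rw [slope_def_field]
      apply div_nonpos_of_nonneg_of_nonpos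
      · rw [heq]; linarith [hlt u hu.1.le hu.2]
      · linarith [hu.2]
    rw [heq] at hle
    linarith
  -- Grönwall
  have hgron := le_gronwallBound_of_liminf_deriv_right_le
    (f := fun τ => n τ - nst) (f' := fun τ => α * n τ - β * n τ ^ (1 + γ * θ))
    (δ := M - nst) (K := -(α * (γ * θ))) (ε := 0) (a := 0) (b := t)
    (fun τ hτ => ((hdn τ hτ.1).sub_const nst).continuousAt.continuousWithinAt)
    (fun x hx r' hr' => by
      have hdw : HasDerivWithinAt (fun τ => n τ - nst)
          (α * n x - β * n x ^ (1 + γ * θ)) (Ici x) x :=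
        ((hdn x hx.1).sub_const nst).hasDerivWithinAt
      refine (hdw.liminf_right_slope_le hr').mono fun z hz => ?_
      rwa [slope_def_field, div_eq_inv_mul] at hz)
    (by show n 0 - nst ≤ M - nst; rw [hn0])
    (fun x hx => by
      have hnx : 0 ≤ n x := le_of_lt (lt_trans (by positivity) (inv x hx.1))
      have := key (n x) hnx
      show α * n x - β * n x ^ (1 + γ * θ) ≤ -(α * (γ * θ)) * (n x - nst) + 0
      linarith)
    t ⟨ht, le_refl t⟩
  rw [gronwallBound_ε0, sub_zero] at hgron
  have hgron' : n t - nst ≤ (M - nst) * Real.exp (-(α * (γ * θ)) * t) := hgron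
  linarith
end
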